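/- If p is even, then for every q' with gcd(p,q') = 1, the graph G(n,p,q',m) is isomorphic to G(n,p,q,m) whenever q' = ±q^{±1} in Z_{2p}, and G(n,p,q',−m) is isomorphic to G(n,p,q,m) whenever q' = ±q^{±1}+p in Z_{2p}; here q⁻¹ denotes the inverse of q modulo 2p. -/
import Mathlib


/-- The sign function μ : Z_{2p} → {−1,+1}: +1 iff the representative of j lies in {1,…,p}. -/
def mu (p : ℕ) (j : ZMod (2*p)) : ℤ :=
  if 1 ≤ j.val ∧ j.val ≤ p then 1 else -1

section Toolkit
variable {p : ℕ}

lemma mod_cases3 {N k : ℕ} (hN : 0 < N) (h : k < 3*N) :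
    (k % N = k ∧ k < N) ∨ (k % N = k - N ∧ N ≤ k ∧ k < 2*N) ∨ (k % N = k - 2*N ∧ 2*N ≤ k) := by
  rcases Nat.lt_or_ge k N with h1 | h1
  · exact Or.inl ⟨Nat.mod_eq_of_lt h1, h1⟩
  rcases Nat.lt_or_ge k (2*N) with h2 | h2
  · refine Or.inr (Or.inl ⟨?_, h1, h2⟩)
    rw [Nat.mod_eq_sub_mod h1, Nat.mod_eq_of_lt (by omega)]
  · refine Or.inr (Or.inr ⟨?_, h2⟩)
    rw [Nat.mod_eq_sub_mod h1, Nat.mod_eq_sub_mod (by omega), Nat.mod_eq_of_lt (by omega)]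
    omega

variable [NeZero (2*p)]

lemma self_cast (a : ZMod (2*p)) : ((a.val : ℕ) : ZMod (2*p)) = a := by
  simp [ZMod.natCast_val, ZMod.cast_id]

lemma eq_iff_val (a b : ZMod (2*p)) : a = b ↔ a.val = b.val := by
  constructor
  · rintro rfl; rfl
  · intro h
    have := congrArg (fun k : ℕ => ((k : ℕ) : ZMod (2*p))) h
    simpa [self_cast] using this

lemma two_p_zero : (2 * (p : ZMod (2*p)) : ZMod (2*p)) = 0 := by
  have := ZMod.natCast_self (2*p)
  push_cast at this
  exact this

lemma val_p (hp : 0 < p) : ((p : ℕ) : ZMod (2*p)).val = p := by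
  rw [ZMod.val_natCast, Nat.mod_eq_of_lt (by omega)]

lemma val_of_cast_eq {a : ZMod (2*p)} {k : ℕ} (h : ((k : ℕ) : ZMod (2*p)) = a) :
    a.val = k % (2*p) := by rw [← h, ZMod.val_natCast]

lemma repr_one_sub (j : ZMod (2*p)) :
    (((2*p + 1 - j.val : ℕ) : ℕ) : ZMod (2*p)) = 1 - j := by
  have hv : j.val < 2*p := ZMod.val_lt j
  rw [Nat.cast_sub (by omega)]
  push_cast [ZMod.natCast_val, ZMod.cast_id]
  linear_combination (two_p_zero (p := p))

lemma repr_neg (j : ZMod (2*p)) :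
    (((2*p - j.val : ℕ) : ℕ) : ZMod (2*p)) = - j := by
  have hv : j.val < 2*p := ZMod.val_lt j
  rw [Nat.cast_sub (by omega)]
  push_cast [ZMod.natCast_val, ZMod.cast_id]
  linear_combination (two_p_zero (p := p))

lemma repr_add_p (j : ZMod (2*p)) :
    (((j.val + p : ℕ) : ℕ) : ZMod (2*p)) = j + p := by
  push_cast [ZMod.natCast_val, ZMod.cast_id]; try rfl

lemma repr_two_sub (j : ZMod (2*p)) :
    (((2*p + 2 - j.val : ℕ) : ℕ) : ZMod (2*p)) = 2 - j := by
  have hv : j.val < 2*p := ZMod.val_lt j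
  rw [Nat.cast_sub (by omega)]
  push_cast [ZMod.natCast_val, ZMod.cast_id]
  linear_combination (two_p_zero (p := p))

lemma repr_add_one (j : ZMod (2*p)) :
    (((j.val + 1 : ℕ) : ℕ) : ZMod (2*p)) = j + 1 := by
  push_cast [ZMod.natCast_val, ZMod.cast_id]; try rfl

lemma val_one' (hp : 0 < p) : (1 : ZMod (2*p)).val = 1 := by
  rw [ZMod.val_one_eq_one_mod, Nat.mod_eq_of_lt (by omega)]

variable (hp : 0 < p)
include hp

/-- M1 -/
lemma mu_one_sub (j : ZMod (2*p)) : mu p (1 - j) = - mu p j := by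
  have hv : j.val < 2*p := ZMod.val_lt j
  have h1 := val_of_cast_eq (repr_one_sub j)
  rcases mod_cases3 (N := 2*p) (k := 2*p+1-j.val) (by omega) (by omega) with ⟨h,h'⟩|⟨h,h'⟩|⟨h,h'⟩ <;>
    rw [h] at h1 <;> unfold mu <;> rw [h1] <;> split_ifs <;> omega

/-- M2 -/
lemma mu_add_p (j : ZMod (2*p)) : mu p (j + p) = - mu p j := by
  have hv : j.val < 2*p := ZMod.val_lt j
  have h1 := val_of_cast_eq (repr_add_p j)
  rcases mod_cases3 (N := 2*p) (k := j.val + p) (by omega) (by omega) with ⟨h,h'⟩|⟨h,h'⟩|⟨h,h'⟩ <;>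
    rw [h] at h1 <;> unfold mu <;> rw [h1] <;> split_ifs <;> omega

/-- M3 -/
lemma mu_add_one_odd (j : ZMod (2*p)) (hj : j.val % 2 = 1) (hpe : p % 2 = 0) :
    mu p (j + 1) = mu p j := by
  have hv : j.val < 2*p := ZMod.val_lt j
  have h1 := val_of_cast_eq (repr_add_one j)
  rcases mod_cases3 (N := 2*p) (k := j.val + 1) (by omega) (by omega) with ⟨h,h'⟩|⟨h,h'⟩|⟨h,h'⟩ <;>
    rw [h] at h1 <;> unfold mu <;> rw [h1] <;> split_ifs <;> omega

/-- M4 -/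
lemma mu_sub_step_even (j : ZMod (2*p)) (hj : j.val % 2 = 0) (hpe : p % 2 = 0) :
    mu p j - mu p (j + 1) =
      (if j = 0 then -2 else if j = ((p : ℕ) : ZMod (2*p)) then 2 else 0) := by
  have hv : j.val < 2*p := ZMod.val_lt j
  have h1 := val_of_cast_eq (repr_add_one j)
  have hz : (j = 0) ↔ j.val = 0 := by rw [eq_iff_val]; simp
  have hpp : (j = ((p:ℕ) : ZMod (2*p))) ↔ j.val = p := by rw [eq_iff_val, val_p hp]
  rcases mod_cases3 (N := 2*p) (k := j.val + 1) (by omega) (by omega) with ⟨h,h'⟩|⟨h,h'⟩|⟨h,h'⟩ <;>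
    rw [h] at h1 <;> unfold mu <;> rw [h1] <;> simp only [hz, hpp] <;> split_ifs <;> omega

/-- M5 -/
lemma mu_neg_add_even (j : ZMod (2*p)) (hj : j.val % 2 = 0) (hpe : p % 2 = 0) :
    mu p (-j) + mu p j =
      (if j = 0 then -2 else if j = ((p : ℕ) : ZMod (2*p)) then 2 else 0) := by
  have hv : j.val < 2*p := ZMod.val_lt j
  have h1 := val_of_cast_eq (repr_neg j)
  have hz : (j = 0) ↔ j.val = 0 := by rw [eq_iff_val]; simp
  have hpp : (j = ((p:ℕ) : ZMod (2*p))) ↔ j.val = p := by rw [eq_iff_val, val_p hp]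
  rcases mod_cases3 (N := 2*p) (k := 2*p - j.val) (by omega) (by omega) with ⟨h,h'⟩|⟨h,h'⟩|⟨h,h'⟩ <;>
    rw [h] at h1 <;> unfold mu <;> rw [h1] <;> simp only [hz, hpp] <;> split_ifs <;> omega

/-- M6 -/
lemma mu_neg_add_odd (j : ZMod (2*p)) (hj : j.val % 2 = 1) (hpe : p % 2 = 0) :
    mu p (-j) + mu p j = 0 := by
  have hv : j.val < 2*p := ZMod.val_lt j
  have h1 := val_of_cast_eq (repr_neg j)
  rcases mod_cases3 (N := 2*p) (k := 2*p - j.val) (by omega) (by omega) with ⟨h,h'⟩|⟨h,h'⟩|⟨h,h'⟩ <;>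
    rw [h] at h1 <;> unfold mu <;> rw [h1] <;> split_ifs <;> omega

/-- M7 -/
lemma mu_two_sub_even (j : ZMod (2*p)) (hj : j.val % 2 = 0) (hpe : p % 2 = 0) (hp2 : 2 ≤ p) :
    mu p (2 - j) + mu p j = 0 := by
  have hv : j.val < 2*p := ZMod.val_lt j
  have h1 := val_of_cast_eq (repr_two_sub j)
  rcases mod_cases3 (N := 2*p) (k := 2*p + 2 - j.val) (by omega) (by omega) with ⟨h,h'⟩|⟨h,h'⟩|⟨h,h'⟩ <;>
    rw [h] at h1 <;> unfold mu <;> rw [h1] <;> split_ifs <;> omega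

/-- M8 -/
lemma mu_two_sub_odd (j : ZMod (2*p)) (hj : j.val % 2 = 1) (hpe : p % 2 = 0) (hp2 : 2 ≤ p) :
    mu p (2 - j) + mu p j =
      (if j = 1 then 2 else if j = 1 + ((p : ℕ) : ZMod (2*p)) then -2 else 0) := by
  have hv : j.val < 2*p := ZMod.val_lt j
  have h1 := val_of_cast_eq (repr_two_sub j)
  have hz : (j = 1) ↔ j.val = 1 := by rw [eq_iff_val, val_one' hp]
  have hpp : (j = 1 + ((p:ℕ) : ZMod (2*p))) ↔ j.val = p + 1 := by
    rw [eq_iff_val]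
    have : ((1 : ZMod (2*p)) + ((p:ℕ) : ZMod (2*p))).val = p + 1 := by
      have := val_of_cast_eq (a := (1 : ZMod (2*p)) + ((p:ℕ):ZMod (2*p))) (k := 1 + p) (by push_cast; ring)
      rw [this, Nat.mod_eq_of_lt (by omega)]; omega
    rw [this]
  rcases mod_cases3 (N := 2*p) (k := 2*p + 2 - j.val) (by omega) (by omega) with ⟨h,h'⟩|⟨h,h'⟩|⟨h,h'⟩ <;>
    rw [h] at h1 <;> unfold mu <;> rw [h1] <;> simp only [hz, hpp] <;> split_ifs <;> omega

lemma mu_zero : mu p 0 = -1 := by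
  unfold mu; simp

lemma mu_one : mu p 1 = 1 := by
  unfold mu; rw [val_one' hp, if_pos ⟨le_rfl, hp⟩]

lemma mu_two (hp2 : 2 ≤ p) : mu p 2 = 1 := by
  unfold mu
  have : ((2:ℕ) : ZMod (2*p)).val = 2 := by rw [ZMod.val_natCast, Nat.mod_eq_of_lt (by omega)]
  have h2 : ((2 : ZMod (2*p))).val = 2 := by push_cast at this ⊢; exact this
  rw [h2]; simp [hp2]

end Toolkit

/-- ε₀(i,j) = (i + m·μ(j−q), 1−j+2q). -/
def eps0 (n p : ℕ) (q : ZMod (2*p)) (m : ZMod n) :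
    ZMod n × ZMod (2*p) → ZMod n × ZMod (2*p) :=
  fun v => (v.1 + m * ((mu p (v.2 - q) : ℤ) : ZMod n), 1 - v.2 + 2*q)

/-- ε₁(i,j) = (i, j−(−1)^j). -/
def eps1 (n p : ℕ) : ZMod n × ZMod (2*p) → ZMod n × ZMod (2*p) :=
  fun v => (v.1, v.2 - (-1 : ZMod (2*p)) ^ v.2.val)

/-- ε₂(i,j) = (i, j+(−1)^j). -/
def eps2 (n p : ℕ) : ZMod n × ZMod (2*p) → ZMod n × ZMod (2*p) :=
  fun v => (v.1, v.2 + (-1 : ZMod (2*p)) ^ v.2.val)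

/-- ε₃(i,j) = (i+μ(j), 1−j). -/
def eps3 (n p : ℕ) : ZMod n × ZMod (2*p) → ZMod n × ZMod (2*p) :=
  fun v => (v.1 + ((mu p v.2 : ℤ) : ZMod n), 1 - v.2)

/-- The four involutions of the Lins-Mandel graph G(n,p,q,m), indexed by colours. -/
def eps (n p : ℕ) (q : ZMod (2*p)) (m : ZMod n) :
    Fin 4 → ZMod n × ZMod (2*p) → ZMod n × ZMod (2*p)
  | 0 => eps0 n p q m
  | 1 => eps1 n p
  | 2 => eps2 n p
  | 3 => eps3 n p

/-- Isomorphism of Lins-Mandel graphs: a bijection of vertices together with a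
permutation of the four colours intertwining the defining involutions. -/
def LMIsom (n p : ℕ) (q : ZMod (2*p)) (m : ZMod n)
    (n' p' : ℕ) (q' : ZMod (2*p')) (m' : ZMod n') : Prop :=
  ∃ (f : ZMod n × ZMod (2*p) ≃ ZMod n' × ZMod (2*p')) (φ : Equiv.Perm (Fin 4)),
    ∀ (k : Fin 4) (v : ZMod n × ZMod (2*p)),
      f (eps n p q m k v) = eps n' p' q' m' (φ k) (f v)

section Parity
variable {p : ℕ} [NeZero (2*p)]

lemma pv_add (a b : ZMod (2*p)) : (a + b).val % 2 = (a.val + b.val) % 2 := by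
  rw [ZMod.val_add, Nat.mod_mod_of_dvd _ ⟨p, rfl⟩]

lemma pv_mul (a b : ZMod (2*p)) : (a * b).val % 2 = (a.val * b.val) % 2 := by
  rw [ZMod.val_mul, Nat.mod_mod_of_dvd _ ⟨p, rfl⟩]

lemma pv_neg (a : ZMod (2*p)) : (-a).val % 2 = a.val % 2 := by
  have hv : a.val < 2*p := ZMod.val_lt a
  have h1 := val_of_cast_eq (repr_neg a)
  rw [h1, Nat.mod_mod_of_dvd _ ⟨p, rfl⟩]
  omega

lemma pv_sub (a b : ZMod (2*p)) : (a - b).val % 2 = (a.val + b.val) % 2 := by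
  rw [sub_eq_add_neg, pv_add, Nat.add_mod, pv_neg, ← Nat.add_mod]

lemma pv_mul_odd (a b : ZMod (2*p)) (ha : a.val % 2 = 1) :
    (a * b).val % 2 = b.val % 2 := by
  rw [pv_mul, Nat.mul_mod, ha, one_mul]
  omega

lemma neg_one_pow_even {k : ℕ} (h : k % 2 = 0) : ((-1 : ZMod (2*p)))^k = 1 := by
  exact (Nat.even_iff.mpr h).neg_one_pow

lemma neg_one_pow_odd {k : ℕ} (h : k % 2 = 1) : ((-1 : ZMod (2*p)))^k = -1 := by
  exact (Nat.odd_iff.mpr h).neg_one_pow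

end Parity

section Step
variable (n p : ℕ) (q : ZMod (2*p)) (m : ZMod n)

/-- increment function for the first-coordinate correction -/
def stepf (x : ℕ) : ZMod n :=
  if x % 2 = 0 then ((mu p (q * (x : ZMod (2*p))) : ℤ) : ZMod n)
  else -(m * ((mu p (q * (x : ZMod (2*p))) : ℤ) : ZMod n))

def tf (x : ℕ) : ZMod n := ∑ u ∈ Finset.range x, stepf n p q m u

def tfun (j : ZMod (2*p)) : ZMod n := tf n p q m j.val

variable {p}
variable [NeZero (2*p)] (hp : 0 < p) (hpe : p % 2 = 0) (hqo : q.val % 2 = 1)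

/-- `q * p = p` for odd q -/
lemma q_mul_p (hqo' : q.val % 2 = 1) : q * ((p:ℕ) : ZMod (2*p)) = ((p:ℕ) : ZMod (2*p)) := by
  obtain ⟨c, hc⟩ : ∃ c, q.val = 2*c + 1 := ⟨q.val/2, by omega⟩
  have hq : q = ((2*c+1 : ℕ) : ZMod (2*p)) := by rw [← hc, self_cast]
  rw [hq]
  push_cast
  have : ((c : ZMod (2*p)) * (2 * (p:ℕ))) = 0 := by
    rw [two_p_zero (p := p)]  -- hope works
    ring
  linear_combination this

lemma even_mul_p (x : ZMod (2*p)) (hx : x.val % 2 = 0) :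
    x * ((p:ℕ) : ZMod (2*p)) = 0 := by
  obtain ⟨c, hc⟩ : ∃ c, x.val = 2*c := ⟨x.val/2, by omega⟩
  have hq : x = ((2*c : ℕ) : ZMod (2*p)) := by rw [← hc, self_cast]
  rw [hq]
  push_cast
  have : ((c : ZMod (2*p)) * (2 * (p:ℕ))) = 0 := by
    rw [two_p_zero (p := p)]
    ring
  linear_combination this

include hp hpe hqo

lemma stepf_add_p (x : ℕ) : stepf n p q m (x + p) = - stepf n p q m x := by
  unfold stepf
  have h1 : (x + p) % 2 = x % 2 := by omega
  have h2 : q * (((x + p : ℕ)) : ZMod (2*p)) = q * (x : ZMod (2*p)) + ((p:ℕ) : ZMod (2*p)) := by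
    push_cast
    rw [mul_add, q_mul_p q hqo]
  rw [h1, h2, mu_add_p hp]
  push_cast
  split_ifs <;> ring

lemma tf_period (x : ℕ) : tf n p q m (x + 2*p) = tf n p q m x := by
  have key : ∀ y : ℕ, tf n p q m (y + 2*p) - tf n p q m y = tf n p q m (2*p) - tf n p q m 0 := by
    intro y
    induction y with
    | zero => simp
    | succ k ih =>
        have e1 : k + 1 + 2*p = (k + 2*p) + 1 := by ring
        have e2 : stepf n p q m (k + 2*p) = stepf n p q m k := by
          have : k + 2*p = (k + p) + p := by ring
          rw [this, stepf_add_p n q m hp hpe hqo, stepf_add_p n q m hp hpe hqo, neg_neg]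
        unfold tf at ih ⊢
        rw [e1, Finset.sum_range_succ, Finset.sum_range_succ, e2]
        rw [← ih]
        ring
    
  have hz : tf n p q m (2*p) = 0 := by
    unfold tf
    have : 2*p = p + p := by ring
    rw [this, Finset.sum_range_add]
    have : ∀ u ∈ Finset.range p, stepf n p q m (p + u) = - stepf n p q m u := by
      intro u _
      rw [Nat.add_comm p u, stepf_add_p n q m hp hpe hqo]
    rw [Finset.sum_congr rfl this, Finset.sum_neg_distrib]
    ring
  have h0 : tf n p q m 0 = 0 := rfl
  have := key x
  rw [hz, h0, sub_zero] at this
  exact sub_eq_zero.mp this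
end Step
section Part3
variable {N : ℕ} [NeZero N]

lemma zmod_induct (P : ZMod N → Prop) (b : ZMod N) (hb : P b)
    (hstep : ∀ j, P j → P (j + 1)) : ∀ j, P j := by
  have key : ∀ k : ℕ, P (b + (k : ZMod N)) := by
    intro k
    induction k with
    | zero => simpa using hb
    | succ t ih =>
        have e : b + ((t+1 : ℕ) : ZMod N) = (b + ((t:ℕ) : ZMod N)) + 1 := by push_cast; ring
        rw [e]; exact hstep _ ih
  intro j
  have := key (j - b).val
  rwa [ZMod.natCast_val, ZMod.cast_id, add_sub_cancel] at this

end Part3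

section Part3b
variable (n : ℕ) {p : ℕ} (q : ZMod (2*p)) (m : ZMod n)
variable [NeZero (2*p)] (hp : 0 < p) (hpe : p % 2 = 0) (hqo : q.val % 2 = 1)

include hp hpe hqo

lemma tf_mod (y : ℕ) : tf n p q m (y % (2*p)) = tf n p q m y := by
  have key : ∀ k r : ℕ, tf n p q m (r + 2*p*k) = tf n p q m r := by
    intro k
    induction k with
    | zero => intro r; simp
    | succ t ih =>
        intro r
        have e : r + 2*p*(t+1) = (r + 2*p*t) + 2*p := by ring
        rw [e, tf_period n q m hp hpe hqo, ih]
  conv_rhs => rw [← Nat.mod_add_div y (2*p)]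
  rw [key]

lemma tfun_succ (j : ZMod (2*p)) :
    tfun n p q m (j + 1) = tfun n p q m j +
      (if j.val % 2 = 0 then ((mu p (q*j) : ℤ) : ZMod n)
       else -(m * ((mu p (q*j) : ℤ) : ZMod n))) := by
  unfold tfun
  have h1 : (j + 1).val = (j.val + 1) % (2*p) := val_of_cast_eq (repr_add_one j)
  rw [h1, tf_mod n q m hp hpe hqo]
  show tf n p q m (j.val + 1) = _
  unfold tf
  rw [Finset.sum_range_succ]
  show _ + stepf n p q m j.val = _
  unfold stepf
  rw [self_cast]

end Part3b

/-- the second-coordinate bijection of the duality -/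
def gfun {p : ℕ} (q : ZMod (2*p)) (j : ZMod (2*p)) : ZMod (2*p) :=
  if j.val % 2 = 0 then q * j else 1 + q - q * j

section Part3c
variable {p : ℕ} (q q'' : ZMod (2*p))
variable [NeZero (2*p)] (hp : 0 < p) (hpe : p % 2 = 0) (hp2 : 2 ≤ p) (hqo : q.val % 2 = 1)

lemma val_two' (hp2 : 2 ≤ p) : (2 : ZMod (2*p)).val = 2 := by
  have : ((2:ℕ) : ZMod (2*p)).val = 2 := by rw [ZMod.val_natCast, Nat.mod_eq_of_lt (by omega)]
  push_cast at this; exact this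

include hqo in
lemma gfun_parity (j : ZMod (2*p)) : (gfun q j).val % 2 = j.val % 2 := by
  unfold gfun
  rcases Nat.mod_two_eq_zero_or_one j.val with hj | hj <;> rw [hj]
  · rw [if_pos rfl, pv_mul_odd q j hqo, hj]
  · have hp0 : 0 < p := by have := NeZero.ne (2*p); omega
    rw [if_neg (by omega), pv_sub]
    have e1 : (1 + q).val % 2 = 0 := by rw [pv_add, val_one' hp0]; omega
    rw [Nat.add_mod, e1, pv_mul_odd q j hqo]
    omega

include hp2 in
lemma two_q_parity : (2 * q'' : ZMod (2*p)).val % 2 = 0 := by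
  rw [pv_mul, val_two' hp2]
  omega

include hqo in
lemma q_isUnit (hqp : Nat.gcd p q.val = 1) : IsUnit q := by
  have h2 : Nat.Coprime q.val 2 := by
    exact Nat.coprime_two_right.mpr (Nat.odd_iff.mpr hqo)
  have hpq : Nat.Coprime q.val p := Nat.Coprime.symm hqp
  have hcop : Nat.Coprime q.val (2*p) := Nat.Coprime.mul_right h2 hpq
  rw [← self_cast q]
  exact (ZMod.isUnit_iff_coprime q.val (2*p)).mpr hcop

include hqo in
lemma gfun_inj (hqp : Nat.gcd p q.val = 1) : Function.Injective (gfun (p := p) q) := by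
  have hu : IsUnit q := q_isUnit q hqo hqp
  intro a b hab
  have hpar : a.val % 2 = b.val % 2 := by
    rw [← gfun_parity q hqo a, ← gfun_parity q hqo b, hab]
  unfold gfun at hab
  rcases Nat.mod_two_eq_zero_or_one a.val with ha | ha
  · rw [if_pos ha, if_pos (hpar ▸ ha)] at hab
    exact hu.mul_left_cancel hab
  · rw [if_neg (by omega), if_neg (by rw [← hpar]; omega)] at hab
    have : q * a = q * b := by linear_combination -hab
    exact hu.mul_left_cancel this

end Part3c
section Part4
variable (n : ℕ) {p : ℕ} (q : ZMod (2*p)) (m : ZMod n)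
variable [NeZero (2*p)] (hp : 0 < p) (hpe : p % 2 = 0) (hqo : q.val % 2 = 1)
  (hqp : Nat.gcd p q.val = 1)

include hp hpe hqo hqp

/-- identity (c): t(1-j) = t(j) + μ(j) -/
lemma tfun_one_sub : ∀ j : ZMod (2*p),
    tfun n p q m (1 - j) = tfun n p q m j + ((mu p j : ℤ) : ZMod n) := by
  have hu : IsUnit q := q_isUnit q hqo hqp
  refine zmod_induct _ 0 ?_ ?_
  · show tfun n p q m (1 - 0) = tfun n p q m 0 + _
    rw [sub_zero]
    have hv1 : (1 : ZMod (2*p)).val = 1 := val_one' hp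
    unfold tfun
    rw [hv1, ZMod.val_zero]
    show tf n p q m 1 = tf n p q m 0 + _
    unfold tf
    rw [Finset.sum_range_one, Finset.sum_range_zero, zero_add]
    show stepf n p q m 0 = _
    unfold stepf
    norm_num
  · intro j ih
    have s1 := tfun_succ n q m hp hpe hqo (-j)
    have s2 := tfun_succ n q m hp hpe hqo j
    have h1 : (1 : ZMod (2*p)) - (j+1) = -j := by ring
    have h2 : (1 : ZMod (2*p)) - j = -j + 1 := by ring
    rw [h2, s1] at ih
    rw [h1, s2]
    have key : (if (-j).val % 2 = 0 then ((mu p (q * -j) : ℤ) : ZMod n)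
          else -(m * ((mu p (q * -j) : ℤ) : ZMod n)))
        + (if j.val % 2 = 0 then ((mu p (q * j) : ℤ) : ZMod n)
          else -(m * ((mu p (q * j) : ℤ) : ZMod n)))
        = ((mu p j : ℤ) : ZMod n) - ((mu p (j+1) : ℤ) : ZMod n) := by
      have hnp : (-j).val % 2 = j.val % 2 := pv_neg j
      have hqjpar : (q * j).val % 2 = j.val % 2 := pv_mul_odd q j hqo
      rcases Nat.mod_two_eq_zero_or_one j.val with hj | hj
      · rw [if_pos (by omega), if_pos hj, mul_neg]
        have c1 : (q * j = 0) ↔ j = 0 :=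
          ⟨fun h => hu.mul_left_cancel (by rw [h, mul_zero]),
           fun h => by rw [h, mul_zero]⟩
        have c2 : (q * j = ((p:ℕ) : ZMod (2*p))) ↔ j = ((p:ℕ) : ZMod (2*p)) :=
          ⟨fun h => hu.mul_left_cancel (by rw [h, q_mul_p q hqo]),
           fun h => by rw [h, q_mul_p q hqo]⟩
        have hZ : (mu p (-(q*j)) + mu p (q*j) : ℤ) = mu p j - mu p (j+1) := by
          rw [mu_neg_add_even hp (q*j) (by omega) hpe, mu_sub_step_even hp j hj hpe]
          simp only [c1, c2]
        have := congrArg (fun z : ℤ => (z : ZMod n)) hZ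
        push_cast at this
        linear_combination this
      · rw [if_neg (by omega), if_neg (by omega), mul_neg]
        have hZ : (mu p (-(q*j)) + mu p (q*j) : ℤ) = 0 :=
          mu_neg_add_odd hp (q*j) (by omega) hpe
        have h3 : mu p (j + 1) = mu p j := mu_add_one_odd hp j hj hpe
        have := congrArg (fun z : ℤ => (z : ZMod n)) hZ
        push_cast at this
        rw [h3]
        linear_combination (-m) * this
    linear_combination ih - key

end Part4
section Part5
variable (n : ℕ) {p : ℕ} (q q'' : ZMod (2*p)) (m m'' : ZMod n)
variable [NeZero (2*p)] (hp : 0 < p) (hpe : p % 2 = 0) (hqo : q.val % 2 = 1)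
  (hqp : Nat.gcd p q.val = 1) (hq''o : q''.val % 2 = 1)
  (hC : (q * q'' = 1 ∧ m'' = m) ∨ (q * q'' = 1 + ((p:ℕ) : ZMod (2*p)) ∧ m'' = -m))

include hp hpe hqo hqp hq''o hC

/-- identity (d): t(1-j+2q'') = t(j) + m''·μ(j−q'') -/
lemma tfun_dual : ∀ j : ZMod (2*p),
    tfun n p q m (1 - j + 2*q'') = tfun n p q m j + m'' * ((mu p (j - q'') : ℤ) : ZMod n) := by
  have hu : IsUnit q := q_isUnit q hqo hqp
  have hp2 : 2 ≤ p := by omega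
  have hv1 : (1 : ZMod (2*p)).val = 1 := val_one' hp
  have hppz : ((p:ℕ) : ZMod (2*p)) + ((p:ℕ) : ZMod (2*p)) = 0 := by
    have := ZMod.natCast_self (2*p)
    push_cast at this
    linear_combination this
  have hpz_ne : ((p:ℕ) : ZMod (2*p)) ≠ 0 := by
    intro h
    have := congrArg ZMod.val h
    rw [val_p hp, ZMod.val_zero] at this
    omega
  have h2qq : 2 * (q * q'') = 2 := by
    rcases hC with ⟨h, _⟩ | ⟨h, _⟩
    · rw [h]; ring
    · rw [h]; linear_combination hppz
  refine zmod_induct _ (q'' - 1) ?_ ?_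
  · -- base case at j = q'' - 1
    have e0 : (q'' - 1) - q'' = (-1 : ZMod (2*p)) := by ring
    have e1 : (1 : ZMod (2*p)) - (q'' - 1) + 2*q'' = (q'' + 1) + 1 := by ring
    have sA := tfun_succ n q m hp hpe hqo (q'' - 1)
    rw [show q'' - 1 + 1 = q'' from by ring] at sA
    have sB := tfun_succ n q m hp hpe hqo q''
    have sC := tfun_succ n q m hp hpe hqo (q'' + 1)
    have pA : (q'' - 1).val % 2 = 0 := by rw [pv_sub, hv1]; omega
    have pC : (q'' + 1).val % 2 = 0 := by rw [pv_add, hv1]; omega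
    rw [if_pos pA] at sA
    rw [if_neg (by omega)] at sB
    rw [if_pos pC] at sC
    have mD : mu p (-1 : ZMod (2*p)) = -1 := by
      rw [show (-1 : ZMod (2*p)) = 1 - 2 from by ring, mu_one_sub hp, mu_two hp hp2]
    rw [e0, e1, sC, sB, sA, mD]
    rcases hC with ⟨hqq, hm⟩ | ⟨hqq, hm⟩
    · have mA : mu p (q * (q'' - 1)) = - mu p q := by
        rw [show q * (q'' - 1) = 1 - q from by linear_combination hqq, mu_one_sub hp]
      have mB : mu p (q * q'') = 1 := by rw [hqq, mu_one hp]
      have mC : mu p (q * (q'' + 1)) = mu p q := by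
        rw [show q * (q'' + 1) = q + 1 from by linear_combination hqq]
        exact mu_add_one_odd hp q hqo hpe
      rw [mA, mB, mC, hm]
      push_cast
      ring
    · have mA : mu p (q * (q'' - 1)) = mu p q := by
        rw [show q * (q'' - 1) = 1 - (q + ((p:ℕ):ZMod (2*p))) from by
              linear_combination hqq + hppz,
            mu_one_sub hp, mu_add_p hp]
        ring
      have mB : mu p (q * q'') = -1 := by
        rw [hqq, show (1 : ZMod (2*p)) + ((p:ℕ):ZMod (2*p)) = (1:ZMod (2*p)) + ((p:ℕ):ZMod (2*p)) from rfl]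
        rw [show (1 : ZMod (2*p)) + ((p:ℕ):ZMod (2*p)) = ((1:ZMod (2*p))) + ((p:ℕ):ZMod (2*p)) from rfl]
        rw [add_comm]
        rw [show ((p:ℕ):ZMod (2*p)) + 1 = 1 + ((p:ℕ):ZMod (2*p)) from by ring]
        rw [mu_add_p hp, mu_one hp]
      have mC : mu p (q * (q'' + 1)) = - mu p q := by
        rw [show q * (q'' + 1) = (q + 1) + ((p:ℕ):ZMod (2*p)) from by linear_combination hqq,
            mu_add_p hp, mu_add_one_odd hp q hqo hpe]
      rw [mA, mB, mC, hm]
      push_cast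
      ring
  · -- inductive step
    intro j ih
    have e1 : (1 : ZMod (2*p)) - (j+1) + 2*q'' = 2*q'' - j := by ring
    have e2 : (1 : ZMod (2*p)) - j + 2*q'' = (2*q'' - j) + 1 := by ring
    have e3 : (j + 1) - q'' = (j - q'') + 1 := by ring
    have sW := tfun_succ n q m hp hpe hqo (2*q'' - j)
    have sJ := tfun_succ n q m hp hpe hqo j
    rw [e2, sW] at ih
    rw [e1, e3, sJ]
    have hwpar : (2*q'' - j).val % 2 = j.val % 2 := by
      rw [pv_sub, Nat.add_mod, two_q_parity q'' hp2]
      omega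
    have qW : q * (2*q'' - j) = 2 - q * j := by linear_combination h2qq
    have hqjpar : (q * j).val % 2 = j.val % 2 := pv_mul_odd q j hqo
    have key : (if (2*q''-j).val % 2 = 0 then ((mu p (q * (2*q''-j)) : ℤ) : ZMod n)
          else -(m * ((mu p (q * (2*q''-j)) : ℤ) : ZMod n)))
        + (if j.val % 2 = 0 then ((mu p (q * j) : ℤ) : ZMod n)
          else -(m * ((mu p (q * j) : ℤ) : ZMod n)))
        = m'' * (((mu p (j - q'') : ℤ) : ZMod n) - ((mu p ((j - q'') + 1) : ℤ) : ZMod n)) := by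
      rcases Nat.mod_two_eq_zero_or_one j.val with hj | hj
      · -- j even
        rw [if_pos (by omega), if_pos hj, qW]
        have hsub : (j - q'').val % 2 = 1 := by rw [pv_sub]; omega
        have h3 : mu p ((j - q'') + 1) = mu p (j - q'') := mu_add_one_odd hp _ hsub hpe
        have hZ : (mu p (2 - q*j) + mu p (q*j) : ℤ) = 0 :=
          mu_two_sub_even hp (q*j) (by omega) hpe hp2
        have := congrArg (fun z : ℤ => (z : ZMod n)) hZ
        push_cast at this
        rw [h3]
        linear_combination this
      · -- j odd
        rw [if_neg (by omega), if_neg (by omega), qW]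
        have hsub : (j - q'').val % 2 = 0 := by rw [pv_sub]; omega
        have hZ := mu_two_sub_odd hp (q*j) (by omega) hpe hp2
        have hY := mu_sub_step_even hp (j - q'') hsub hpe
        rcases hC with ⟨hqq, hm⟩ | ⟨hqq, hm⟩
        · have cA1 : (q * j = 1) ↔ (j - q'' = 0) := by
            rw [sub_eq_zero]
            exact ⟨fun h => hu.mul_left_cancel (by rw [h, hqq]),
                   fun h => by rw [h, hqq]⟩
          have cA2 : (q * j = 1 + ((p:ℕ):ZMod (2*p))) ↔ (j - q'' = ((p:ℕ):ZMod (2*p))) := by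
            rw [sub_eq_iff_eq_add]
            have hqp' : q * (((p:ℕ):ZMod (2*p)) + q'') = 1 + ((p:ℕ):ZMod (2*p)) := by
              rw [mul_add, q_mul_p q hqo, hqq]; ring
            exact ⟨fun h => hu.mul_left_cancel (by rw [h, hqp']),
                   fun h => by rw [h, hqp']⟩
          have hfin : (mu p (2 - q*j) + mu p (q*j) : ℤ)
              = -(mu p (j - q'') - mu p ((j - q'') + 1)) := by
            rw [hZ, hY]
            simp only [cA1, cA2]
            split_ifs <;> norm_num
          have := congrArg (fun z : ℤ => (z : ZMod n)) hfin
          push_cast at this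
          rw [hm]
          linear_combination (-m : ZMod n) * this
        · have cB1 : (q * j = 1) ↔ (j - q'' = ((p:ℕ):ZMod (2*p))) := by
            rw [sub_eq_iff_eq_add]
            have hqp' : q * (((p:ℕ):ZMod (2*p)) + q'') = 1 := by
              rw [mul_add, q_mul_p q hqo, hqq]
              linear_combination hppz
            exact ⟨fun h => hu.mul_left_cancel (by rw [h, hqp']),
                   fun h => by rw [h, hqp']⟩
          have cB2 : (q * j = 1 + ((p:ℕ):ZMod (2*p))) ↔ (j - q'' = 0) := by
            rw [sub_eq_zero]
            exact ⟨fun h => hu.mul_left_cancel (by rw [h, hqq]),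
                   fun h => by rw [h, hqq]⟩
          have hfin : (mu p (2 - q*j) + mu p (q*j) : ℤ)
              = (mu p (j - q'') - mu p ((j - q'') + 1)) := by
            rw [hZ, hY]
            simp only [cB1, cB2]
            split_ifs with h1 h2
            · exfalso; exact hpz_ne (by rw [← h1, h2])
            · norm_num
            · norm_num
            · norm_num
          have := congrArg (fun z : ℤ => (z : ZMod n)) hfin
          push_cast at this
          rw [hm]
          linear_combination (-m : ZMod n) * this
    linear_combination ih - key

end Part5
section Part6

lemma LM_refl (n p : ℕ) (q : ZMod (2*p)) (m : ZMod n) : LMIsom n p q m n p q m :=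
  ⟨Equiv.refl _, Equiv.refl _, fun k v => rfl⟩

lemma LM_trans {n1 p1 n2 p2 n3 p3 : ℕ} {q1 : ZMod (2*p1)} {m1 : ZMod n1}
    {q2 : ZMod (2*p2)} {m2 : ZMod n2} {q3 : ZMod (2*p3)} {m3 : ZMod n3} :
    LMIsom n1 p1 q1 m1 n2 p2 q2 m2 → LMIsom n2 p2 q2 m2 n3 p3 q3 m3 →
    LMIsom n1 p1 q1 m1 n3 p3 q3 m3 := by
  rintro ⟨f, φ, hf⟩ ⟨g, ψ, hg⟩
  exact ⟨f.trans g, φ.trans ψ, fun k v => by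
    simp only [Equiv.trans_apply, Equiv.coe_trans, Function.comp_apply, hf, hg]⟩

/-- the negation isomorphism -/
lemma LM_neg (n p : ℕ) (hp : 0 < p) (Q q1 : ZMod (2*p)) (M m1 : ZMod n)
    (hcase : (q1 = -Q ∧ m1 = M) ∨ (q1 = -Q + ((p:ℕ) : ZMod (2*p)) ∧ m1 = -M)) :
    LMIsom n p q1 m1 n p Q M := by
  haveI : NeZero (2*p) := ⟨by omega⟩
  have hinv : Function.Involutive
      (fun v : ZMod n × ZMod (2*p) => (-v.1, 1 - v.2)) := by
    intro v; simp
  refine ⟨hinv.toPerm _, Equiv.refl _, ?_⟩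
  intro k v
  obtain ⟨i, j⟩ := v
  have happ : ∀ w : ZMod n × ZMod (2*p), hinv.toPerm _ w = (-w.1, 1 - w.2) := fun w => rfl
  have hppz : 2 * ((p:ℕ) : ZMod (2*p)) = 0 := two_p_zero
  fin_cases k
  · -- eps0
    show hinv.toPerm _ (eps0 n p q1 m1 (i,j)) = eps0 n p Q M (hinv.toPerm _ (i,j))
    rw [happ, happ]
    unfold eps0
    simp only
    rcases hcase with ⟨hq1, hm1⟩ | ⟨hq1, hm1⟩
    · refine Prod.ext ?_ ?_
      · show -(i + m1 * _) = -i + M * ((mu p ((1 - j) - Q) : ℤ) : ZMod n)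
        rw [hq1, hm1, show (1 : ZMod (2*p)) - j - Q = 1 - (j - -Q) from by ring,
          mu_one_sub hp]
        push_cast
        ring
      · show 1 - (1 - j + 2*q1) = 1 - (1-j) + 2*Q
        rw [hq1]; ring
    · refine Prod.ext ?_ ?_
      · show -(i + m1 * _) = -i + M * ((mu p ((1 - j) - Q) : ℤ) : ZMod n)
        rw [hq1, hm1, show (1 : ZMod (2*p)) - j - Q = 1 - (j - -Q) from by ring,
          mu_one_sub hp,
          show j - (-Q + ((p:ℕ) : ZMod (2*p))) = (j - -Q) + ((p:ℕ) : ZMod (2*p)) from by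
            linear_combination -hppz,
          mu_add_p hp]
        push_cast
        ring
      · show 1 - (1 - j + 2*q1) = 1 - (1-j) + 2*Q
        rw [hq1]; linear_combination -hppz
  · -- eps1
    show hinv.toPerm _ (eps1 n p (i,j)) = eps1 n p (hinv.toPerm _ (i,j))
    rw [happ, happ]
    unfold eps1
    simp only
    refine Prod.ext rfl ?_
    show 1 - (j - (-1 : ZMod (2*p))^j.val) = (1 - j) - (-1 : ZMod (2*p))^(1-j).val
    have hpar : (1 - j).val % 2 = (1 + j.val) % 2 := by rw [pv_sub, val_one' hp]
    rcases Nat.mod_two_eq_zero_or_one j.val with hj | hj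
    · rw [neg_one_pow_even hj, neg_one_pow_odd (by omega)]; ring
    · rw [neg_one_pow_odd hj, neg_one_pow_even (by omega)]; ring
  · -- eps2
    show hinv.toPerm _ (eps2 n p (i,j)) = eps2 n p (hinv.toPerm _ (i,j))
    rw [happ, happ]
    unfold eps2
    simp only
    refine Prod.ext rfl ?_
    show 1 - (j + (-1 : ZMod (2*p))^j.val) = (1 - j) + (-1 : ZMod (2*p))^(1-j).val
    have hpar : (1 - j).val % 2 = (1 + j.val) % 2 := by rw [pv_sub, val_one' hp]
    rcases Nat.mod_two_eq_zero_or_one j.val with hj | hj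
    · rw [neg_one_pow_even hj, neg_one_pow_odd (by omega)]; ring
    · rw [neg_one_pow_odd hj, neg_one_pow_even (by omega)]; ring
  · -- eps3
    show hinv.toPerm _ (eps3 n p (i,j)) = eps3 n p (hinv.toPerm _ (i,j))
    rw [happ, happ]
    unfold eps3
    simp only
    refine Prod.ext ?_ ?_
    · show -(i + ((mu p j : ℤ) : ZMod n)) = -i + ((mu p (1-j) : ℤ) : ZMod n)
      rw [mu_one_sub hp]
      push_cast
      ring
    · rfl

end Part6
section Part7

lemma LM_dual (n p : ℕ) (hp : 0 < p) (hpe : p % 2 = 0)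
    (q q'' : ZMod (2*p)) (m m'' : ZMod n)
    (hqp : Nat.gcd p q.val = 1) (hq''o : q''.val % 2 = 1)
    (hC : (q * q'' = 1 ∧ m'' = m) ∨ (q * q'' = 1 + ((p:ℕ) : ZMod (2*p)) ∧ m'' = -m)) :
    LMIsom n p q'' m'' n p q m := by
  haveI : NeZero (2*p) := ⟨by omega⟩
  have hp2 : 2 ≤ p := by omega
  have hv1 : (1 : ZMod (2*p)).val = 1 := val_one' hp
  have hqo : q.val % 2 = 1 := by
    rcases Nat.mod_two_eq_zero_or_one q.val with h | h
    · exfalso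
      have : (2:ℕ) ∣ Nat.gcd p q.val := Nat.dvd_gcd ⟨p/2, by omega⟩ ⟨q.val/2, by omega⟩
      omega
    · exact h
  have hppz : ((p:ℕ) : ZMod (2*p)) + ((p:ℕ) : ZMod (2*p)) = 0 := by
    have := ZMod.natCast_self (2*p)
    push_cast at this
    linear_combination this
  have h2qq : 2 * (q * q'') = 2 := by
    rcases hC with ⟨h, _⟩ | ⟨h, _⟩
    · rw [h]; ring
    · rw [h]; linear_combination hppz
  have hinv : Function.Involutive
      (fun v : ZMod n × ZMod (2*p) => (tfun n p q m v.2 - v.1, v.2)) := by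
    intro v; simp
  have gbij : Function.Bijective (gfun (p := p) q) :=
    Finite.injective_iff_bijective.mp (gfun_inj q hqo hqp)
  set gE : ZMod (2*p) ≃ ZMod (2*p) := Equiv.ofBijective _ gbij with hgE
  set φ : Equiv.Perm (Fin 4) := (Equiv.swap 0 1).trans (Equiv.swap 2 3) with hφ
  set f : ZMod n × ZMod (2*p) ≃ ZMod n × ZMod (2*p) :=
    (hinv.toPerm _).trans ((Equiv.refl (ZMod n)).prodCongr gE) with hf
  have happ : ∀ w : ZMod n × ZMod (2*p),
      f w = (tfun n p q m w.2 - w.1, gfun q w.2) := fun w => rfl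
  refine ⟨f, φ, ?_⟩
  intro k v
  obtain ⟨i, j⟩ := v
  have hgp : ∀ x : ZMod (2*p), (gfun q x).val % 2 = x.val % 2 := gfun_parity q hqo
  have hqjpar : (q * j).val % 2 = j.val % 2 := pv_mul_odd q j hqo
  have hdualpar : (1 - j + 2*q'').val % 2 = (1 + j.val) % 2 := by
    rw [pv_add, Nat.add_mod ((1-j).val), two_q_parity q'' hp2, pv_sub, hv1]
    omega
  have honesub : (1 - j).val % 2 = (1 + j.val) % 2 := by rw [pv_sub, hv1]
  have haddone : (j + 1).val % 2 = (j.val + 1) % 2 := by rw [pv_add, hv1]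
  have hsubone : (j - 1).val % 2 = (j.val + 1) % 2 := by rw [pv_sub, hv1]
  fin_cases k
  · -- k = 0 : source eps0, target eps1
    show f (eps0 n p q'' m'' (i,j)) = eps n p q m (φ 0) (f (i,j))
    rw [show φ 0 = 1 from by rw [hφ]; decide]
    show f (eps0 n p q'' m'' (i,j)) = eps1 n p (f (i,j))
    unfold eps0 eps1
    simp only
    rw [happ, happ]
    simp only
    have hdual := tfun_dual n q q'' m m'' hp hpe hqo hqp hq''o hC j
    refine Prod.ext ?_ ?_
    · show tfun n p q m (1 - j + 2*q'') - (i + m'' * _) = tfun n p q m j - i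
      linear_combination hdual
    · show gfun q (1 - j + 2*q'') = gfun q j - (-1 : ZMod (2*p))^(gfun q j).val
      rcases Nat.mod_two_eq_zero_or_one j.val with hj | hj
      · rw [neg_one_pow_even (by rw [hgp]; exact hj)]
        unfold gfun
        rw [if_neg (by omega), if_pos hj]
        linear_combination -h2qq
      · rw [neg_one_pow_odd (by rw [hgp]; exact hj)]
        unfold gfun
        rw [if_pos (by omega), if_neg (by omega)]
        linear_combination h2qq
  · -- k = 1 : source eps1, target eps0
    show f (eps1 n p (i,j)) = eps n p q m (φ 1) (f (i,j))
    rw [show φ 1 = 0 from by rw [hφ]; decide]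
    show f (eps1 n p (i,j)) = eps0 n p q m (f (i,j))
    unfold eps1 eps0
    simp only
    rw [happ, happ]
    simp only
    rcases Nat.mod_two_eq_zero_or_one j.val with hj | hj
    · rw [neg_one_pow_even hj]
      have sA := tfun_succ n q m hp hpe hqo (j - 1)
      rw [show j - 1 + 1 = j from by ring, if_neg (by rw [hsubone]; omega)] at sA
      refine Prod.ext ?_ ?_
      · show tfun n p q m (j - 1) - i
            = tfun n p q m j - i + m * ((mu p (gfun q j - q) : ℤ) : ZMod n)
        rw [show gfun q j - q = q * (j - 1) from by
              unfold gfun; rw [if_pos hj]; ring]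
        push_cast
        linear_combination -sA
      · show gfun q (j - 1) = 1 - gfun q j + 2*q
        unfold gfun
        rw [if_neg (by rw [hsubone]; omega), if_pos hj]
        ring
    · rw [neg_one_pow_odd hj]
      have sA := tfun_succ n q m hp hpe hqo j
      rw [if_neg (by omega)] at sA
      refine Prod.ext ?_ ?_
      · show tfun n p q m (j - -1) - i
            = tfun n p q m j - i + m * ((mu p (gfun q j - q) : ℤ) : ZMod n)
        rw [show j - -1 = j + 1 from by ring,
            show gfun q j - q = 1 - q * j from by
              unfold gfun; rw [if_neg (by omega)]; ring,
            mu_one_sub hp]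
        push_cast
        linear_combination sA
      · show gfun q (j - -1) = 1 - gfun q j + 2*q
        rw [show j - -1 = j + 1 from by ring]
        unfold gfun
        rw [if_pos (by rw [haddone]; omega), if_neg (by omega)]
        ring
  · -- k = 2 : source eps2, target eps3
    show f (eps2 n p (i,j)) = eps n p q m (φ 2) (f (i,j))
    rw [show φ 2 = 3 from by rw [hφ]; decide]
    show f (eps2 n p (i,j)) = eps3 n p (f (i,j))
    unfold eps2 eps3
    simp only
    rw [happ, happ]
    simp only
    rcases Nat.mod_two_eq_zero_or_one j.val with hj | hj
    · rw [neg_one_pow_even hj]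
      have sA := tfun_succ n q m hp hpe hqo j
      rw [if_pos hj] at sA
      refine Prod.ext ?_ ?_
      · show tfun n p q m (j + 1) - i
            = tfun n p q m j - i + ((mu p (gfun q j) : ℤ) : ZMod n)
        rw [show gfun q j = q * j from by unfold gfun; rw [if_pos hj]]
        linear_combination sA
      · show gfun q (j + 1) = 1 - gfun q j
        unfold gfun
        rw [if_neg (by rw [haddone]; omega), if_pos hj]
        ring
    · rw [neg_one_pow_odd hj]
      have sA := tfun_succ n q m hp hpe hqo (j - 1)
      rw [show j - 1 + 1 = j from by ring, if_pos (by rw [hsubone]; omega)] at sA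
      refine Prod.ext ?_ ?_
      · show tfun n p q m (j + -1) - i
            = tfun n p q m j - i + ((mu p (gfun q j) : ℤ) : ZMod n)
        rw [show j + -1 = j - 1 from by ring,
            show gfun q j = 1 - q * (j - 1) from by
              unfold gfun; rw [if_neg (by omega)]; ring,
            mu_one_sub hp]
        push_cast
        linear_combination -sA
      · show gfun q (j + -1) = 1 - gfun q j
        rw [show j + -1 = j - 1 from by ring]
        unfold gfun
        rw [if_pos (by rw [hsubone]; omega), if_neg (by omega)]
        ring
  · -- k = 3 : source eps3, target eps2
    show f (eps3 n p (i,j)) = eps n p q m (φ 3) (f (i,j))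
    rw [show φ 3 = 2 from by rw [hφ]; decide]
    show f (eps3 n p (i,j)) = eps2 n p (f (i,j))
    unfold eps3 eps2
    simp only
    rw [happ, happ]
    simp only
    have hos := tfun_one_sub n q m hp hpe hqo hqp j
    refine Prod.ext ?_ ?_
    · show tfun n p q m (1 - j) - (i + ((mu p j : ℤ) : ZMod n)) = tfun n p q m j - i
      linear_combination hos
    · show gfun q (1 - j) = gfun q j + (-1 : ZMod (2*p))^(gfun q j).val
      rcases Nat.mod_two_eq_zero_or_one j.val with hj | hj
      · rw [neg_one_pow_even (by rw [hgp]; exact hj)]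
        unfold gfun
        rw [if_neg (by rw [honesub]; omega), if_pos hj]
        ring
      · rw [neg_one_pow_odd (by rw [hgp]; exact hj)]
        unfold gfun
        rw [if_pos (by rw [honesub]; omega), if_neg (by omega)]
        ring

end Part7

/-- For p even and gcd(p,q) = 1: G(n,p,q',m) ≅ G(n,p,q,m) whenever q' = ±q^{±1}
in Z_{2p}, and G(n,p,q',−m) ≅ G(n,p,q,m) whenever q' = ±q^{±1}+p in Z_{2p}. -/
theorem isom_even_p (n p : ℕ) (hn : 0 < n) (hp : 0 < p) (hpe : Even p)
    (q : ZMod (2*p)) (hq : Nat.gcd p q.val = 1) (m : ZMod n)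
    (q' : ZMod (2*p)) (hq' : Nat.gcd p q'.val = 1) :
    ((q' = q ∨ q' = -q ∨ q' = q⁻¹ ∨ q' = -q⁻¹) →
      LMIsom n p q' m n p q m) ∧
    ((q' = q + p ∨ q' = -q + p ∨ q' = q⁻¹ + p ∨ q' = -q⁻¹ + p) →
      LMIsom n p q' (-m) n p q m) := by
  haveI : NeZero (2*p) := ⟨by omega⟩
  have hpe' : p % 2 = 0 := Nat.even_iff.mp hpe
  have hqo : q.val % 2 = 1 := by
    rcases Nat.mod_two_eq_zero_or_one q.val with h | h
    · exfalso
      have : (2:ℕ) ∣ Nat.gcd p q.val := Nat.dvd_gcd ⟨p/2, by omega⟩ ⟨q.val/2, by omega⟩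
      omega
    · exact h
  have hcop : Nat.gcd q.val (2*p) = 1 :=
    Nat.Coprime.mul_right (Nat.coprime_two_right.mpr (Nat.odd_iff.mpr hqo))
      (Nat.Coprime.symm hq)
  have hqinv : q * q⁻¹ = 1 := by
    rw [ZMod.mul_inv_eq_gcd, hcop]
    norm_num
  have hqio : (q⁻¹).val % 2 = 1 := by
    have h := pv_mul_odd q q⁻¹ hqo
    rw [hqinv, val_one' hp] at h
    omega
  constructor
  · rintro (h | h | h | h) <;> rw [h]
    · exact LM_refl n p q m
    · exact LM_neg n p hp q (-q) m m (Or.inl ⟨rfl, rfl⟩)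
    · exact LM_dual n p hp hpe' q q⁻¹ m m hq hqio (Or.inl ⟨hqinv, rfl⟩)
    · exact LM_trans (LM_neg n p hp q⁻¹ (-q⁻¹) m m (Or.inl ⟨rfl, rfl⟩))
        (LM_dual n p hp hpe' q q⁻¹ m m hq hqio (Or.inl ⟨hqinv, rfl⟩))
  · rintro (h | h | h | h) <;> rw [h]
    · exact LM_trans
        (LM_neg n p hp (-q) (q + ((p:ℕ) : ZMod (2*p))) m (-m) (Or.inr ⟨by ring, rfl⟩))
        (LM_neg n p hp q (-q) m m (Or.inl ⟨rfl, rfl⟩))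
    · exact LM_neg n p hp q (-q + ((p:ℕ) : ZMod (2*p))) m (-m) (Or.inr ⟨rfl, rfl⟩)
    · refine LM_dual n p hp hpe' q (q⁻¹ + ((p:ℕ) : ZMod (2*p))) m (-m) hq ?_ (Or.inr ⟨?_, rfl⟩)
      · rw [pv_add, val_p hp]
        omega
      · rw [mul_add, q_mul_p q hqo, hqinv]
    · exact LM_trans
        (LM_neg n p hp q⁻¹ (-q⁻¹ + ((p:ℕ) : ZMod (2*p))) m (-m) (Or.inr ⟨rfl, rfl⟩))
        (LM_dual n p hp hpe' q q⁻¹ m m hq hqio (Or.inl ⟨hqinv, rfl⟩))
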